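/- arXiv:2006.05418 — 2 statements merged into one kernel-verified Lean document; each statement's English description precedes it below -/
import Mathlib

section
/- Let X = (X₁,…,Xₙ) be a complex random vector with independent coordinates such that each symmetrization X̃ᵢ satisfies P(b ≤ |X̃ᵢ| ≤ b⁻¹) ≥ b for a fixed b ∈ (0,1). Let v ∈ ℂⁿ and suppose θ ∈ ℂ satisfies |θ| ≤ (b/10)·‖v‖∞⁻¹. Then E[dist²(θ (v ⋆ X̃), (ℤ+iℤ)ⁿ)] ≥ b³ |θ|² ‖v‖₂², where v ⋆ X̃ denotes the coordinatewise (Hadamard) product and dist is Euclidean distance from the point (θv₁X̃₁,…,θvₙX̃ₙ) ∈ ℂⁿ to the Gaussian integer lattice (ℤ+iℤ)ⁿ. -/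
/-!
If `b ≤ |z| ≤ b⁻¹` and `|a| ≤ b/10`, then `|a z| ≤ 1/10`, so `a z` is nearest to the lattice
point `0` and its squared distance to `ℤ + iℤ` is `|a z|² ≥ b² |a|²`. By Markov's inequality
each coordinate therefore contributes at least `b · b² |θ vᵢ|²` to the expectation.
-/

open MeasureTheory ProbabilityTheory

/-- Squared Euclidean distance from `w ∈ ℂ` to the Gaussian integers `ℤ + iℤ`. -/
noncomputable def gaussianLatticeDistSq (w : ℂ) : ℝ :=
  (w.re - round w.re) ^ 2 + (w.im - round w.im) ^ 2

@[fun_prop]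
theorem measurable_round {R : Type*} [Field R] [LinearOrder R] [IsStrictOrderedRing R]
    [FloorRing R] [TopologicalSpace R] [OrderTopology R] [MeasurableSpace R]
    [OpensMeasurableSpace R] [MeasurableAdd R] : Measurable (round : R → ℤ) := by
  rw [funext round_eq]
  exact Int.measurable_floor.comp (measurable_add_const _)

theorem round_eq_zero_of_abs_lt_half {x : ℝ} (hx : |x| < 1 / 2) : round x = 0 := by
  obtain ⟨hlo, hhi⟩ := abs_lt.mp hx
  exact round_eq_zero_iff.mpr ⟨hlo.le, hhi⟩

namespace gaussianLatticeDistSq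

theorem nonneg (w : ℂ) : 0 ≤ gaussianLatticeDistSq w := by
  unfold gaussianLatticeDistSq; positivity

theorem le_half (w : ℂ) : gaussianLatticeDistSq w ≤ 1 / 2 := by
  have hre : (w.re - round w.re) ^ 2 ≤ (1 / 2 : ℝ) ^ 2 := sq_le_sq' (abs_le.mp (abs_sub_round _)).1
    (abs_le.mp (abs_sub_round _)).2
  have him : (w.im - round w.im) ^ 2 ≤ (1 / 2 : ℝ) ^ 2 := sq_le_sq' (abs_le.mp (abs_sub_round _)).1
    (abs_le.mp (abs_sub_round _)).2
  unfold gaussianLatticeDistSq; linarith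

theorem eq_norm_sq_of_norm_lt_half {w : ℂ} (hw : ‖w‖ < 1 / 2) :
    gaussianLatticeDistSq w = ‖w‖ ^ 2 := by
  rw [gaussianLatticeDistSq, Complex.sq_norm, Complex.normSq_apply,
    round_eq_zero_of_abs_lt_half ((Complex.abs_re_le_norm w).trans_lt hw),
    round_eq_zero_of_abs_lt_half ((Complex.abs_im_le_norm w).trans_lt hw)]
  push_cast; ring

theorem measurable : Measurable gaussianLatticeDistSq := by
  have hround : Measurable fun x : ℝ => (round x : ℝ) := measurable_from_top.comp measurable_round
  unfold gaussianLatticeDistSq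
  fun_prop

end gaussianLatticeDistSq

theorem sq_mul_sq_norm_le_gaussianLatticeDistSq_mul {a z : ℂ} {b : ℝ} (hb : 0 < b)
    (ha : ‖a‖ ≤ b / 10) (hz : b ≤ ‖z‖ ∧ ‖z‖ ≤ b⁻¹) :
    b ^ 2 * ‖a‖ ^ 2 ≤ gaussianLatticeDistSq (a * z) := by
  have hsmall : ‖a * z‖ < 1 / 2 :=
    calc ‖a * z‖ = ‖a‖ * ‖z‖ := norm_mul a z
      _ ≤ b / 10 * b⁻¹ := mul_le_mul ha hz.2 (norm_nonneg z) (by positivity)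
      _ = 1 / 10 := by field_simp
      _ < 1 / 2 := by norm_num
  rw [gaussianLatticeDistSq.eq_norm_sq_of_norm_lt_half hsmall, norm_mul, ← mul_pow, mul_comm b]
  gcongr
  exact hz.1

section Expectation

variable {Ω : Type*} [MeasurableSpace Ω] {μ : Measure Ω} [IsFiniteMeasure μ] {Y : Ω → ℂ}

theorem integrable_gaussianLatticeDistSq_comp (hY : AEMeasurable Y μ) :
    Integrable (fun ω => gaussianLatticeDistSq (Y ω)) μ :=
  .of_bound (gaussianLatticeDistSq.measurable.comp_aemeasurable hY).aestronglyMeasurable (1 / 2)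
    (.of_forall fun ω => by
      rw [Real.norm_of_nonneg (gaussianLatticeDistSq.nonneg _)]
      exact gaussianLatticeDistSq.le_half _)

theorem mul_le_integral_gaussianLatticeDistSq_mul (hY : AEMeasurable Y μ) {a : ℂ} {b : ℝ}
    (hb : 0 < b) (ha : ‖a‖ ≤ b / 10)
    (hanti : ENNReal.ofReal b ≤ μ {ω | b ≤ ‖Y ω‖ ∧ ‖Y ω‖ ≤ b⁻¹}) :
    b ^ 3 * ‖a‖ ^ 2 ≤ ∫ ω, gaussianLatticeDistSq (a * Y ω) ∂μ := by
  set c := b ^ 2 * ‖a‖ ^ 2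
  have hprob : b ≤ μ.real {ω | c ≤ gaussianLatticeDistSq (a * Y ω)} := by
    refine (ENNReal.ofReal_le_iff_le_toReal (measure_ne_top _ _)).mp (hanti.trans ?_)
    exact measure_mono fun ω hω => sq_mul_sq_norm_le_gaussianLatticeDistSq_mul hb ha hω
  calc b ^ 3 * ‖a‖ ^ 2 = c * b := by ring
    _ ≤ c * μ.real {ω | c ≤ gaussianLatticeDistSq (a * Y ω)} := by gcongr
    _ ≤ ∫ ω, gaussianLatticeDistSq (a * Y ω) ∂μ :=
      mul_meas_ge_le_integral_of_nonneg (.of_forall fun ω => gaussianLatticeDistSq.nonneg _)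
        (integrable_gaussianLatticeDistSq_comp (hY.const_mul a)) c

end Expectation

theorem lattice_dist_sq_lower_bound_vector_general
    {Ω : Type*} [MeasurableSpace Ω] (μ : Measure Ω) [IsProbabilityMeasure μ]
    (n : ℕ) (X' X'' : Ω → Fin n → ℂ)
    (hX' : Measurable X') (hX'' : Measurable X'')
    (b : ℝ) (hb : b ∈ Set.Ioo (0 : ℝ) 1)
    (hanti : ∀ i, ENNReal.ofReal b ≤
      μ {ω | b ≤ ‖X' ω i - X'' ω i‖ ∧ ‖X' ω i - X'' ω i‖ ≤ b⁻¹})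
    (θ : ℂ) (v : Fin n → ℂ) (hθv : ∀ i, ‖θ‖ * ‖v i‖ ≤ b / 10) :
    b ^ 3 * ‖θ‖ ^ 2 * ∑ i, ‖v i‖ ^ 2 ≤
      ∫ ω, ∑ i, gaussianLatticeDistSq (θ * v i * (X' ω i - X'' ω i)) ∂μ := by
  have hY : ∀ i, AEMeasurable (fun ω => X' ω i - X'' ω i) μ := fun i =>
    (hX'.eval.sub hX''.eval).aemeasurable
  rw [integral_finsetSum _ fun i _ =>
    integrable_gaussianLatticeDistSq_comp ((hY i).const_mul _), Finset.mul_sum]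
  refine Finset.sum_le_sum fun i _ => ?_
  calc b ^ 3 * ‖θ‖ ^ 2 * ‖v i‖ ^ 2 = b ^ 3 * ‖θ * v i‖ ^ 2 := by rw [norm_mul]; ring
    _ ≤ _ := mul_le_integral_gaussianLatticeDistSq_mul (hY i) hb.1 (norm_mul θ (v i) ▸ hθv i)
      (hanti i)

/-- Let `X` have independent coordinates whose symmetrizations `X̃ᵢ = X'ᵢ - X''ᵢ`
satisfy `P(b ≤ |X̃ᵢ| ≤ b⁻¹) ≥ b`. If `|θ| ≤ (b/10)·‖v‖∞⁻¹` (i.e. `|θ||vᵢ| ≤ b/10`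
for every `i`), then `E[dist²(θ (v ⋆ X̃), (ℤ+iℤ)ⁿ)] ≥ b³ |θ|² ‖v‖₂²`. -/
theorem lattice_dist_sq_lower_bound_vector
    {Ω : Type*} [MeasurableSpace Ω] (μ : Measure Ω) [IsProbabilityMeasure μ]
    (n : ℕ) (X X' X'' : Ω → Fin n → ℂ)
    (hX : Measurable X) (hX' : Measurable X') (hX'' : Measurable X'')
    (hcoord : iIndepFun (fun i ω => X ω i) μ)
    (hlaw' : Measure.map X' μ = Measure.map X μ)
    (hlaw'' : Measure.map X'' μ = Measure.map X μ)
    (hind : IndepFun X' X'' μ)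
    (b : ℝ) (hb : b ∈ Set.Ioo (0 : ℝ) 1)
    (hanti : ∀ i, ENNReal.ofReal b ≤
      μ {ω | b ≤ ‖X' ω i - X'' ω i‖ ∧ ‖X' ω i - X'' ω i‖ ≤ b⁻¹})
    (θ : ℂ) (v : Fin n → ℂ) (hθv : ∀ i, ‖θ‖ * ‖v i‖ ≤ b / 10) :
    b ^ 3 * ‖θ‖ ^ 2 * ∑ i, ‖v i‖ ^ 2 ≤
      ∫ ω, ∑ i, gaussianLatticeDistSq (θ * v i * (X' ω i - X'' ω i)) ∂μ :=
  lattice_dist_sq_lower_bound_vector_general μ n X' X'' hX' hX'' b hb hanti θ v hθv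
end

section
/- Let A be an invertible n×n complex matrix with rows X₁,…,Xₙ, and for each i let Uᵢ be the span of the other n−1 rows. Then Σⱼ σⱼ(A)⁻² = Σⱼ dist(Xⱼ, Uⱼ)⁻², where σ₁(A) ≥ … ≥ σₙ(A) > 0 are the singular values of A. -/
open Matrix

/-!
Both sides equal `‖A⁻¹‖²_HS`. On the left, `∑ σⱼ⁻²` is the trace of
`(Aᴴ A)⁻¹ = A⁻¹ (A⁻¹)ᴴ`. On the right, row `j` of `(A⁻¹)ᴴ` (the conjugated `j`-th column of
`A⁻¹`) is a vector `v` with `⟪v, Xₖ⟫ = δⱼₖ`; it spans `Uⱼᗮ`, so projecting `Xⱼ` onto `v` gives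
`dist(Xⱼ, Uⱼ) = |⟪v, Xⱼ⟫| / ‖v‖ = ‖v‖⁻¹`.
-/

open scoped InnerProductSpace

namespace Submodule

variable {𝕜 E : Type*} [RCLike 𝕜] [NormedAddCommGroup E] [InnerProductSpace 𝕜 E]

theorem infDist_eq_norm_sub_starProjection (K : Submodule 𝕜 E) [K.HasOrthogonalProjection]
    (x : E) : Metric.infDist x K = ‖x - K.starProjection x‖ := by
  rw [Metric.infDist_eq_iInf, starProjection_minimal]
  simp only [dist_eq_norm]
  rfl

theorem infDist_eq_norm_inner_div_norm {K : Submodule 𝕜 E} [K.HasOrthogonalProjection] {v : E}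
    (hK : Kᗮ = 𝕜 ∙ v) (x : E) : Metric.infDist x K = ‖⟪v, x⟫_𝕜‖ / ‖v‖ := by
  have hproj : x - K.starProjection x = (𝕜 ∙ v).starProjection x := by
    rw [← starProjection_orthogonal_val]
    congr!
  rw [infDist_eq_norm_sub_starProjection, hproj, starProjection_singleton, norm_smul, norm_div,
    RCLike.norm_ofReal, abs_sq]
  rcases eq_or_ne v 0 with rfl | hv
  · simp
  · field_simp

theorem orthogonal_span_image_compl_singleton_eq_span {ι : Type*} [Fintype ι]
    [FiniteDimensional 𝕜 E] {b : ι → E} (hb : LinearIndependent 𝕜 b)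
    (hcard : Module.finrank 𝕜 E = Fintype.card ι) {j : ι} {v : E} (hv : v ≠ 0)
    (hvb : ∀ k ≠ j, ⟪v, b k⟫_𝕜 = 0) :
    (span 𝕜 (b '' {j}ᶜ))ᗮ = 𝕜 ∙ v := by
  classical
  have hrankK : Module.finrank 𝕜 (span 𝕜 (b '' {j}ᶜ)) = Fintype.card ι - 1 := by
    rw [Set.image_eq_range, finrank_span_eq_card (b := fun k : ({j}ᶜ : Set ι) ↦ b k)
      (hb.comp _ Subtype.val_injective), Fintype.card_compl_set, Set.card_singleton]
  set K := span 𝕜 (b '' {j}ᶜ)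
  have hvK : 𝕜 ∙ v ≤ Kᗮ := by
    rw [← isOrtho_iff_le, isOrtho_span]
    rintro _ rfl _ ⟨k, hk, rfl⟩
    exact hvb k hk
  refine (eq_of_le_of_finrank_le hvK ?_).symm
  have hsum := K.finrank_add_finrank_orthogonal
  have hcard_pos : 0 < Fintype.card ι := Fintype.card_pos_iff.mpr ⟨j⟩
  rw [finrank_span_singleton hv]
  omega

end Submodule

namespace Matrix

variable {𝕜 m n : Type*} [RCLike 𝕜] [Fintype m] [Fintype n]

theorem trace_conjTranspose_mul_self (B : Matrix m n 𝕜) :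
    (Bᴴ * B).trace = ∑ j, ∑ i, (‖B i j‖ ^ 2 : 𝕜) := by
  simp [trace, mul_apply, RCLike.conj_mul]

theorem inner_toLp_conjTranspose_row_toLp_row (A B : Matrix n n 𝕜) (j k : n) :
    ⟪WithLp.toLp 2 (Bᴴ j), WithLp.toLp 2 (A k)⟫_𝕜 = (A * B) k j := by
  simp [EuclideanSpace.inner_toLp_toLp, dotProduct, mul_apply]

variable [DecidableEq n]

theorem IsHermitian.trace_cfc {H : Matrix n n 𝕜} (hH : H.IsHermitian) (f : ℝ → ℝ) :
    (cfc f H).trace = ∑ i, (f (hH.eigenvalues i) : 𝕜) := by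
  rw [hH.cfc_eq, IsHermitian.cfc, Unitary.conjStarAlgAut_apply, trace_mul_cycle,
    Unitary.coe_star_mul_self, one_mul, trace_diagonal]
  rfl

theorem IsHermitian.trace_inv {H : Matrix n n 𝕜} (hH : H.IsHermitian) (h : IsUnit H) :
    H⁻¹.trace = ∑ i, ((hH.eigenvalues i)⁻¹ : 𝕜) := by
  rw [nonsing_inv_eq_ringInverse, ← cfc_ringInverse_id (R := ℝ) (a := H) h, hH.trace_cfc]
  simp

theorem sum_inv_eigenvalues_conjTranspose_mul_self {A : Matrix n n 𝕜} (h : IsUnit A)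
    (hA : (Aᴴ * A).IsHermitian) :
    ∑ i, (hA.eigenvalues i)⁻¹ = ∑ j, ∑ i, ‖A⁻¹ i j‖ ^ 2 := by
  apply RCLike.ofReal_injective (K := 𝕜)
  push_cast
  rw [← hA.trace_inv (h.star.mul h), mul_inv_rev, ← conjTranspose_nonsing_inv, trace_mul_comm,
    trace_conjTranspose_mul_self]

theorem infDist_row_span_other_rows {A : Matrix n n 𝕜} (hA : IsUnit A) (j : n) :
    Metric.infDist (WithLp.toLp 2 (A j))
        (Submodule.span 𝕜 ((fun k ↦ WithLp.toLp 2 (A k)) '' {j}ᶜ)) =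
      ‖WithLp.toLp 2 (A⁻¹ᴴ j)‖⁻¹ := by
  have hdual (k : n) :
      ⟪WithLp.toLp 2 (A⁻¹ᴴ j), WithLp.toLp 2 (A k)⟫_𝕜 = if k = j then 1 else 0 := by
    rw [inner_toLp_conjTranspose_row_toLp_row,
      mul_nonsing_inv A ((isUnit_iff_isUnit_det A).mp hA), one_apply]
  have hrows : LinearIndependent 𝕜 fun k ↦ (WithLp.toLp 2 (A k) : EuclideanSpace 𝕜 n) :=
    (linearIndependent_rows_of_isUnit hA).map' (WithLp.linearEquiv 2 𝕜 (n → 𝕜)).symm.toLinearMap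
      (LinearEquiv.ker _)
  have hv : WithLp.toLp 2 (A⁻¹ᴴ j) ≠ 0 := fun hv ↦ by simpa [hv] using hdual j
  have hK := Submodule.orthogonal_span_image_compl_singleton_eq_span hrows
    finrank_euclideanSpace hv fun k hk ↦ by rw [hdual, if_neg hk]
  rw [Submodule.infDist_eq_norm_inner_div_norm hK, hdual, if_pos rfl, norm_one, one_div]

end Matrix

/-- Negative second moment identity: for an invertible `n×n` complex matrix `A`
with singular values `σⱼ` (so `σⱼ²` are the eigenvalues of `AᴴA`) and rows
`X₁,…,Xₙ`, one has `Σⱼ σⱼ⁻² = Σⱼ dist(Xⱼ, Uⱼ)⁻²`, where `Uⱼ` is the span of the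
other `n-1` rows. -/
theorem negative_second_moment_identity
    (n : ℕ) (A : Matrix (Fin n) (Fin n) ℂ) (hdet : A.det ≠ 0)
    (hA : (Aᴴ * A).IsHermitian) :
    ∑ j, (hA.eigenvalues j)⁻¹ =
      ∑ j, ((Metric.infDist
          ((WithLp.equiv 2 (Fin n → ℂ)).symm (A j))
          (Submodule.span ℂ
            {x : EuclideanSpace ℂ (Fin n) |
              ∃ k : Fin n, k ≠ j ∧ x = (WithLp.equiv 2 (Fin n → ℂ)).symm (A k)})) ^ 2)⁻¹ := by
  have hunit : IsUnit A := (isUnit_iff_isUnit_det A).mpr hdet.isUnit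
  rw [sum_inv_eigenvalues_conjTranspose_mul_self hunit hA]
  refine Finset.sum_congr rfl fun j _ ↦ ?_
  have hUj : {x : EuclideanSpace ℂ (Fin n) |
      ∃ k : Fin n, k ≠ j ∧ x = (WithLp.equiv 2 (Fin n → ℂ)).symm (A k)} =
      (fun k ↦ WithLp.toLp 2 (A k)) '' {j}ᶜ := by
    ext
    simp [eq_comm]
  rw [hUj, WithLp.equiv_symm_apply, infDist_row_span_other_rows hunit j, inv_pow, inv_inv,
    EuclideanSpace.norm_sq_eq]
  simp
end
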